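/- Let K be a field of prime characteristic p > 0 and let P_n(t) ∈ K[t] be the polynomials defined by P_0 = 1, P_1 = t, and P_{n+2} = t·P_{n+1} − P_n for n ≥ 0. Then the set of monic irreducible polynomials f ∈ K[t] such that f divides P_{p^e−2} for some integer e ≥ 1 is infinite. -/

import Mathlib

/-!
Write `q = p ^ e`. With `t = x + x⁻¹` one has `P_n(t) = (x^{n+1} - x^{-(n+1)}) / (x - x⁻¹)`,
and the Chebyshev polynomial `C_n(t) = x^n + x^{-n}` satisfies `C_q = t^q` in characteristic
`p`. Hence `(t² - 4) · P_q · P_{q-2} = C_q² - t² = (t^q - t)(t^q + t)`, and both factors on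
the right are separable since their derivatives are `∓1`. So every irreducible factor of
`P_{q-2}` occurs in it at most twice, and the monic irreducible factors of `P_{q-2}` have total
degree at least `(q - 2) / 2`, which is unbounded in `e`.
-/

/-- The polynomials `P₀ = 1`, `P₁ = t`, `P_{n+2} = t·P_{n+1} − P_n`. -/
noncomputable def Ppoly (K : Type) [Field K] : ℕ → Polynomial K
  | 0 => 1
  | 1 => Polynomial.X
  | n + 2 => Polynomial.X * Ppoly K (n + 1) - Ppoly K n

open Polynomial UniqueFactorizationMonoid

theorem dvd_radical_sq_of_dvd_mul {M : Type*} [CommMonoidWithZero M] [NormalizedGCDMonoid M]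
    [UniqueFactorizationMonoid M] {a b c : M} (ha : Squarefree a) (hb : Squarefree b)
    (hc : c ∣ a * b) (hc0 : c ≠ 0) : c ∣ radical c ^ 2 := by
  have gcd_dvd_radical {d : M} (hd : Squarefree d) : gcd c d ∣ radical c :=
    (dvd_radical_iff (hd.squarefree_of_dvd (gcd_dvd_right _ _)).isRadical hc0).2
      (gcd_dvd_left _ _)
  have hcb : c ∣ gcd c b * a := mul_comm a _ ▸ dvd_mul_gcd_iff_dvd_mul.2 hc
  have hcab : c ∣ gcd c b * gcd c a := dvd_mul_gcd_iff_dvd_mul.2 hcb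
  exact hcab.trans (sq (radical c) ▸ mul_dvd_mul (gcd_dvd_radical hb) (gcd_dvd_radical ha))

namespace Polynomial

theorem separable_X_pow_add_X {R : Type*} [CommRing R] (p q : ℕ) [CharP R p] (h : p ∣ q) :
    (X ^ q + X : R[X]).Separable := by
  rw [← CharP.cast_eq_zero_iff R[X] p] at h
  rw [separable_def, derivative_add, derivative_X_pow, derivative_X, C_eq_natCast, h, zero_mul,
    zero_add]
  exact isCoprime_one_right

theorem natDegree_le_two_mul_sum_primeFactors {K : Type*} [Field K] [DecidableEq K]
    {f g h : K[X]} (hg : Squarefree g) (hh : Squarefree h) (hf : f ∣ g * h) (hf0 : f ≠ 0) :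
    f.natDegree ≤ 2 * ∑ r ∈ primeFactors f, r.natDegree := calc
  f.natDegree ≤ (radical f ^ 2).natDegree :=
    natDegree_le_of_dvd (dvd_radical_sq_of_dvd_mul hg hh hf hf0) (pow_ne_zero _ radical_ne_zero)
  _ = 2 * (radical f).natDegree := by rw [natDegree_pow, mul_comm]
  _ ≤ 2 * ∑ r ∈ primeFactors f, r.natDegree := Nat.mul_le_mul_left 2 <| natDegree_prod_le _ id

namespace Chebyshev

variable (R : Type*) [CommRing R]

theorem degree_S_natCast [Nontrivial R] (n : ℕ) : (S R n).degree = n := by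
  induction n using Nat.twoStepInduction with
  | zero => simp
  | one => simp
  | more n ih0 ih1 =>
    push_cast at ih1 ⊢
    have hX : (X * S R (n + 1)).degree = ↑(n + 2) := by
      rw [mul_comm, degree_mul_X, ih1]; norm_cast
    have hlt : (S R n).degree < (X * S R (n + 1)).degree := by
      rw [hX, ih0]; exact_mod_cast (by omega)
    rw [S_add_two, degree_sub_eq_left_of_degree_lt hlt, hX]
    norm_cast

theorem C_sq_sub_X_sq (n : ℤ) : C R n ^ 2 - X ^ 2 = (X ^ 2 - 4) * (S R n * S R (n - 2)) := by
  have hC := C_eq_S_sub_X_mul_S R n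
  have hS := S_sub_two R n
  have hsq := S_sq_add_S_sq R (n - 2)
  rw [show n - 2 + 1 = n - 1 by ring] at hsq
  linear_combination (C R n + 2 * S R n - X * S R (n - 1)) * hC + X ^ 2 * hsq +
    (4 * S R n - X ^ 2 * S R (n - 2)) * hS

theorem C_prime_pow_charP (p : ℕ) [Fact p.Prime] [CharP R p] (e : ℕ) :
    C R (p ^ e : ℕ) = X ^ p ^ e := by
  induction e with
  | zero => simp
  | succ e ih =>
    rw [pow_succ, Nat.cast_mul, C_mul, ih, ← dickson_one_one_eq_chebyshev_C,
      dickson_one_one_charP, X_pow_comp, ← pow_mul, mul_comm]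

theorem S_prime_pow_sub_two_dvd (p : ℕ) [Fact p.Prime] [CharP R p] (e : ℕ) :
    S R ((p ^ e : ℕ) - 2) ∣ (X ^ p ^ e - X) * (X ^ p ^ e + X) :=
  Dvd.intro_left ((X ^ 2 - 4) * S R (p ^ e : ℕ)) <| by
    rw [mul_assoc, ← C_sq_sub_X_sq, C_prime_pow_charP]
    ring

end Chebyshev

end Polynomial

theorem Ppoly_eq_S (K : Type) [Field K] (n : ℕ) : Ppoly K n = Chebyshev.S K n := by
  induction n using Ppoly.induct with
  | case1 => simp [Ppoly]
  | case2 => simp [Ppoly]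
  | case3 n ih1 ih0 =>
    rw [Ppoly, ih1, ih0]
    push_cast
    exact (Chebyshev.S_add_two K n).symm

theorem degree_Ppoly (K : Type) [Field K] (n : ℕ) : (Ppoly K n).degree = n :=
  Ppoly_eq_S K n ▸ Chebyshev.degree_S_natCast K n

theorem Ppoly_prime_pow_sub_two_dvd (K : Type) [Field K] (p : ℕ) [Fact p.Prime] [CharP K p]
    {e : ℕ} (he : 1 ≤ e) : Ppoly K (p ^ e - 2) ∣ (X ^ p ^ e - X) * (X ^ p ^ e + X) := by
  have h2 : 2 ≤ p ^ e := (Fact.out : p.Prime).two_le.trans (Nat.le_self_pow (by omega) p)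
  rw [Ppoly_eq_S, Nat.cast_sub h2]
  exact Chebyshev.S_prime_pow_sub_two_dvd K p e

theorem stmt_10 {K : Type} [Field K] (p : ℕ) (hp : p.Prime) [CharP K p] :
    {f : Polynomial K | f.Monic ∧ Irreducible f ∧
      ∃ e : ℕ, 1 ≤ e ∧ f ∣ Ppoly K (p ^ e - 2)}.Infinite := by
  classical
  have := Fact.mk hp
  intro hfin
  set D := ∑ f ∈ hfin.toFinset, f.natDegree
  set e := 2 * D + 3
  have hq : e < p ^ e := Nat.lt_pow_self hp.one_lt
  set P := Ppoly K (p ^ e - 2)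
  have hP0 : P ≠ 0 := ne_zero_of_coe_le_degree (degree_Ppoly K _).ge
  have hfactors : primeFactors P ⊆ hfin.toFinset := fun r hr => by
    obtain ⟨hirr, hmonic, hdvd⟩ :=
      (Polynomial.mem_normalizedFactors_iff hP0).1 (mem_primeFactors.1 hr)
    exact hfin.mem_toFinset.2 ⟨hmonic, hirr, e, by omega, hdvd⟩
  have hpq : p ∣ p ^ e := dvd_pow_self p (by omega)
  have hdeg : p ^ e - 2 ≤ 2 * D := calc
    p ^ e - 2 = P.natDegree := (natDegree_eq_of_degree_eq_some (degree_Ppoly K _)).symm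
    _ ≤ 2 * ∑ r ∈ primeFactors P, r.natDegree :=
      natDegree_le_two_mul_sum_primeFactors (galois_poly_separable p _ hpq).squarefree
        (separable_X_pow_add_X p _ hpq).squarefree (Ppoly_prime_pow_sub_two_dvd K p (by omega)) hP0
    _ ≤ 2 * D := Nat.mul_le_mul_left 2 (Finset.sum_le_sum_of_subset hfactors)
  omega
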